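/- Let π have a simple alignment (i,j) with i = π(1), j = π(n), and let π' swap the images: π'(1) = j, π'(n) = i. Let N and N' be the necklaces of π and π'. If X ∈ Int(N'(π')), X is weakly separated from N_1, and X ≠ N'_1, then X ∈ Int(N(π)). -/

import Mathlib

open Finset

variable {n : ℕ}

/-- Position of `x` in the cyclic order on `Fin n` starting at `i`. -/
def cpos (i x : Fin n) : ℕ := ((x - i : Fin n) : ℕ)

/-- `X ≪_i Y`: every element of `X \\ Y` precedes every element of `Y \\ X`
in the cyclic order starting at `i`. -/
def Ll (i : Fin n) (X Y : Finset (Fin n)) : Prop :=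
  ∀ x ∈ X \ Y, ∀ y ∈ Y \ X, cpos i x < cpos i y

/-- `X` and `Y` are weakly separated. -/
def WSep (X Y : Finset (Fin n)) : Prop := ∃ i : Fin n, Ll i X Y

/-- The Grassmann necklace associated with a permutation `π`:
`N_i = { k : k ≤_i π⁻¹(k) }`. -/
def necklaceOf (π : Equiv.Perm (Fin n)) (i : Fin n) : Finset (Fin n) :=
  Finset.univ.filter fun k => cpos i k ≤ cpos i (π.symm k)

/-- `(i, j)` is an alignment of `π`: the quadruple `π⁻¹(i), i, j, π⁻¹(j)`
occurs in this cyclic order (`j = π(j)` allowed, `i = π(i)` not). -/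
def IsAlignment (π : Equiv.Perm (Fin n)) (i j : Fin n) : Prop :=
  0 < cpos (π.symm i) i ∧
  cpos (π.symm i) i < cpos (π.symm i) j ∧
  cpos (π.symm i) j ≤ cpos (π.symm i) (π.symm j)

/-- The interior of a necklace `N`: `r`-sets `X` with `N_i ≪_i X` for all `i`. -/
def Interior (r : ℕ) (N : Fin n → Finset (Fin n)) : Set (Finset (Fin n)) :=
  {X | X.card = r ∧ ∀ i, Ll i (N i) X}

/-! Write `a = π 1`, `b = π 0` and `N'` for the necklace of `π' = π * swap 1 0`. The two
necklaces agree except at base `1`, where `N'₁ = N₁ - b + a`. The conditions `N'₀ ≪₀ X`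
and `N'₂ ≪₂ X` give `u <₁ a` for `u ∈ N'₁ \ X` when `a ∈ X`, and `b <₁ v` for
`v ∈ X \ N'₁` when `b ∉ X`; with `N'₁ ≪₁ X` this yields `N₁ ≪₁ X` unless `a ∈ X` and
`b ∉ X`. In that case `|X| = |N'₁|` and `X ≠ N'₁` provide such `u` and `v`, so `u, a, b, v`
occur in this cyclic order; then `a, v ∈ X \ N₁` and `u, b ∈ N₁ \ X` interleave, and `X`
is not weakly separated from `N₁`. -/

open Equiv

theorem cpos_lt (i x : Fin n) : cpos i x < n := (x - i).isLt

section CyclicOrder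

variable [NeZero n] {i x y : Fin n}

theorem Fin.val_add_one_eq_ite (z : Fin n) :
    ((z + 1 : Fin n) : ℕ) = if (z : ℕ) + 1 = n then 0 else (z : ℕ) + 1 := by
  obtain ⟨m, rfl⟩ := Nat.exists_eq_succ_of_ne_zero (NeZero.ne n)
  rw [Fin.val_add_one]
  split_ifs <;> simp_all [Fin.ext_iff]

@[simp]
theorem cpos_eq_zero_iff : cpos i x = 0 ↔ x = i := by
  rw [cpos, Fin.val_eq_zero_iff, sub_eq_zero]

theorem cpos_inj : cpos i x = cpos i y ↔ x = y := by
  rw [cpos, cpos, Fin.val_inj, sub_left_inj]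

@[simp]
theorem cpos_self (i : Fin n) : cpos i i = 0 := cpos_eq_zero_iff.2 rfl

theorem cpos_eq_cpos_add_one_add_one (hx : x ≠ i) : cpos i x = cpos (i + 1) x + 1 := by
  have h : cpos i x = ((x - (i + 1) + 1 : Fin n) : ℕ) := by rw [cpos]; congr 1; abel
  rw [Fin.val_add_one_eq_ite] at h
  split_ifs at h
  · exact absurd (cpos_eq_zero_iff.1 h) hx
  · exact h

theorem cpos_add_one_self_add_one (i : Fin n) : cpos (i + 1) i + 1 = n := by
  have h : cpos i i = ((i - (i + 1) + 1 : Fin n) : ℕ) := by rw [cpos]; congr 1; abel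
  rw [Fin.val_add_one_eq_ite, cpos_self] at h
  split_ifs at h with hn
  exact hn

theorem cpos_add_one (hx : x + 1 ≠ i) : cpos i (x + 1) = cpos i x + 1 := by
  have h : cpos i (x + 1) = ((x - i + 1 : Fin n) : ℕ) := by rw [cpos]; congr 1; abel
  rw [Fin.val_add_one_eq_ite] at h
  split_ifs at h
  · exact absurd (cpos_eq_zero_iff.1 h) hx
  · exact h

theorem cpos_le_cpos_add_one_self (i x : Fin n) : cpos (i + 1) x ≤ cpos (i + 1) i := by
  have := cpos_lt (i + 1) x
  have := cpos_add_one_self_add_one i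
  omega

theorem cpos_add_one_le_cpos_add_one_iff (hx : x ≠ i) (hy : y ≠ i) :
    cpos (i + 1) x ≤ cpos (i + 1) y ↔ cpos i x ≤ cpos i y := by
  rw [cpos_eq_cpos_add_one_add_one hx, cpos_eq_cpos_add_one_add_one hy]
  omega

theorem cpos_add_one_lt_cpos_add_one_iff (hx : x ≠ i) (hy : y ≠ i) :
    cpos (i + 1) x < cpos (i + 1) y ↔ cpos i x < cpos i y := by
  simpa only [not_le] using (cpos_add_one_le_cpos_add_one_iff hy hx).not

theorem cpos_eq_ite (i j x : Fin n) :
    cpos j x = if cpos i j ≤ cpos i x then cpos i x - cpos i j else n + cpos i x - cpos i j := by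
  have h : x - j = (x - i) - (j - i) := by abel
  rw [cpos, h]
  split_ifs with hle
  · exact Fin.coe_sub_iff_le.2 hle
  · exact Fin.coe_sub_iff_lt.2 (not_le.1 hle)

theorem cpos_le_cpos_of_crossing {m u a b v : Fin n} (hua : cpos i u < cpos i a)
    (hab : cpos i a < cpos i b) (hbv : cpos i b < cpos i v) (hau : cpos m a < cpos m u) :
    cpos m b ≤ cpos m v := by
  rw [cpos_eq_ite i m a, cpos_eq_ite i m u] at hau
  rw [cpos_eq_ite i m v, cpos_eq_ite i m b]
  have := cpos_lt i v
  split_ifs at hau ⊢ <;> omega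

end CyclicOrder

section Necklace

variable {π : Perm (Fin n)} {i k s t : Fin n}

theorem mem_necklaceOf : k ∈ necklaceOf π i ↔ cpos i k ≤ cpos i (π.symm k) := by
  simp [necklaceOf]

theorem apply_mem_necklaceOf : π k ∈ necklaceOf π i ↔ cpos i (π k) ≤ cpos i k := by
  rw [mem_necklaceOf, symm_apply_apply]

theorem symm_mul_swap_apply_left (π : Perm (Fin n)) (s t : Fin n) :
    (π * swap s t).symm (π s) = t := by
  simp [symm_apply_eq]

theorem symm_mul_swap_apply_right (π : Perm (Fin n)) (s t : Fin n) :
    (π * swap s t).symm (π t) = s := by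
  simp [symm_apply_eq]

theorem symm_mul_swap_apply_of_ne (hs : k ≠ π s) (ht : k ≠ π t) :
    (π * swap s t).symm k = π.symm k := by
  rw [symm_apply_eq, Perm.mul_apply, swap_apply_of_ne_of_ne, apply_symm_apply]
  · exact fun h => hs (π.symm_apply_eq.1 h)
  · exact fun h => ht (π.symm_apply_eq.1 h)

theorem mem_necklaceOf_mul_swap_iff (hs : k ≠ π s) (ht : k ≠ π t) :
    k ∈ necklaceOf (π * swap s t) i ↔ k ∈ necklaceOf π i := by
  rw [mem_necklaceOf, mem_necklaceOf, symm_mul_swap_apply_of_ne hs ht]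

variable [NeZero n]

theorem apply_mem_necklaceOf_add_one (π : Perm (Fin n)) (k : Fin n) :
    π k ∈ necklaceOf π (k + 1) :=
  apply_mem_necklaceOf.2 (cpos_le_cpos_add_one_self k _)

theorem apply_mem_necklaceOf_self_iff : π i ∈ necklaceOf π i ↔ π i = i := by
  rw [apply_mem_necklaceOf, cpos_self, Nat.le_zero, cpos_eq_zero_iff]

theorem apply_zero_mem_necklaceOf_one (π : Perm (Fin n)) : π 0 ∈ necklaceOf π 1 := by
  simpa using apply_mem_necklaceOf_add_one π 0

theorem apply_one_notMem_necklaceOf_one (ha : π 1 ≠ 1) : π 1 ∉ necklaceOf π 1 :=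
  apply_mem_necklaceOf_self_iff.not.2 ha

theorem apply_one_mem_necklaceOf_mul_swap_one (π : Perm (Fin n)) :
    π 1 ∈ necklaceOf (π * swap 1 0) 1 := by
  have h : (π * swap 1 0 : Perm (Fin n)) 0 = π 1 := by rw [Perm.mul_apply, swap_apply_right]
  exact h ▸ apply_zero_mem_necklaceOf_one _

theorem apply_zero_notMem_necklaceOf_mul_swap_one (hb : π 0 ≠ 1) :
    π 0 ∉ necklaceOf (π * swap 1 0) 1 := by
  have h : (π * swap 1 0 : Perm (Fin n)) 1 = π 0 := by rw [Perm.mul_apply, swap_apply_left]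
  exact h ▸ apply_one_notMem_necklaceOf_one (h ▸ hb)

theorem necklaceOf_mul_swap_one (ha : π 1 ≠ 1) (hb : π 0 ≠ 1) :
    necklaceOf (π * swap 1 0) 1 = (necklaceOf π 1).map (swap (π 1) (π 0)).toEmbedding := by
  ext k
  rw [mem_map_equiv, symm_swap]
  by_cases hka : k = π 1
  · simp only [hka, swap_apply_left, apply_one_mem_necklaceOf_mul_swap_one,
      apply_zero_mem_necklaceOf_one]
  by_cases hkb : k = π 0
  · simp only [hkb, swap_apply_right, apply_zero_notMem_necklaceOf_mul_swap_one hb,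
      apply_one_notMem_necklaceOf_one ha]
  rw [swap_apply_of_ne_of_ne hka hkb, mem_necklaceOf_mul_swap_iff hka hkb]

theorem necklaceOf_mul_swap_of_ne (hi : i ≠ 1) (ha : π 1 ≠ 1) (hb : π 0 ≠ 1) :
    necklaceOf (π * swap 1 0) i = necklaceOf π i := by
  have h10 : cpos i 1 = cpos i 0 + 1 := by
    simpa using cpos_add_one (x := (0 : Fin n)) (by simpa using hi.symm)
  have ha' : cpos i (π 1) ≠ cpos i 1 := cpos_inj.not.2 ha
  have hb' : cpos i (π 0) ≠ cpos i 1 := cpos_inj.not.2 hb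
  ext k
  by_cases hka : k = π 1
  · rw [hka, mem_necklaceOf, mem_necklaceOf, symm_mul_swap_apply_left, symm_apply_apply]
    omega
  by_cases hkb : k = π 0
  · rw [hkb, mem_necklaceOf, mem_necklaceOf, symm_mul_swap_apply_right, symm_apply_apply]
    omega
  exact mem_necklaceOf_mul_swap_iff hka hkb

end Necklace

section SimpleAlignment

variable [NeZero n] {π : Perm (Fin n)} {X : Finset (Fin n)}

theorem cpos_one_lt_cpos_apply_one (hX : Ll 0 (necklaceOf (π * swap 1 0) 0) X)
    (ha : π 1 ≠ 0) (hb : π 0 ≠ 1) (haX : π 1 ∈ X) {u : Fin n}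
    (hu : u ∈ necklaceOf (π * swap 1 0) 1 \ X) : cpos 1 u < cpos 1 (π 1) := by
  obtain ⟨hu, huX⟩ := mem_sdiff.1 hu
  have hua : u ≠ π 1 := (haX.ne_of_notMem huX).symm
  have hub : u ≠ π 0 := hu.ne_of_notMem (apply_zero_notMem_necklaceOf_mul_swap_one hb)
  have hq : π.symm u ≠ 0 := fun h => hub (π.symm_apply_eq.1 h)
  rw [mem_necklaceOf, symm_mul_swap_apply_of_ne hua hub] at hu
  have hu0 : u ≠ 0 := by
    rintro rfl
    have := cpos_eq_cpos_add_one_add_one hq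
    have := cpos_add_one_self_add_one (0 : Fin n)
    have := cpos_lt 0 (π.symm 0)
    rw [zero_add] at *
    omega
  have hu' : u ∈ necklaceOf (π * swap 1 0) 0 \ X := by
    rw [mem_sdiff, mem_necklaceOf, symm_mul_swap_apply_of_ne hua hub]
    exact ⟨(cpos_add_one_le_cpos_add_one_iff hu0 hq).1 (by rwa [zero_add]), huX⟩
  have ha' : π 1 ∈ X \ necklaceOf (π * swap 1 0) 0 := by
    rw [mem_sdiff, mem_necklaceOf, symm_mul_swap_apply_left, cpos_self, Nat.le_zero,
      cpos_eq_zero_iff]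
    exact ⟨haX, ha⟩
  simpa using (cpos_add_one_lt_cpos_add_one_iff hu0 ha).2 (hX u hu' (π 1) ha')

theorem cpos_apply_zero_lt_cpos_one (hX : Ll (1 + 1) (necklaceOf (π * swap 1 0) (1 + 1)) X)
    (hb : π 0 ≠ 1) (hbX : π 0 ∉ X) {v : Fin n} (hv : v ∈ X \ necklaceOf (π * swap 1 0) 1) :
    cpos 1 (π 0) < cpos 1 v := by
  obtain ⟨hvX, hv⟩ := mem_sdiff.1 hv
  have hva : v ≠ π 1 := ((apply_one_mem_necklaceOf_mul_swap_one π).ne_of_notMem hv).symm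
  have hvb : v ≠ π 0 := hvX.ne_of_notMem hbX
  have hq : π.symm v ≠ 1 := fun h => hva (π.symm_apply_eq.1 h)
  rw [mem_necklaceOf, symm_mul_swap_apply_of_ne hva hvb, not_le] at hv
  have hv1 : v ≠ 1 := by
    rintro rfl
    simp at hv
  have hv' : v ∈ X \ necklaceOf (π * swap 1 0) (1 + 1) := by
    rw [mem_sdiff, mem_necklaceOf, symm_mul_swap_apply_of_ne hva hvb, not_le]
    exact ⟨hvX, (cpos_add_one_lt_cpos_add_one_iff hq hv1).2 hv⟩
  have hb' : π 0 ∈ necklaceOf (π * swap 1 0) (1 + 1) \ X := by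
    rw [mem_sdiff, mem_necklaceOf, symm_mul_swap_apply_right]
    exact ⟨cpos_le_cpos_add_one_self 1 _, hbX⟩
  exact (cpos_add_one_lt_cpos_add_one_iff hb hv1).1 (hX _ hb' v hv')

theorem apply_zero_mem_of_apply_one_mem (hX : ∀ i, Ll i (necklaceOf (π * swap 1 0) i) X)
    (hcard : X.card = (necklaceOf (π * swap 1 0) 1).card)
    (hne : X ≠ necklaceOf (π * swap 1 0) 1) (hsep : WSep X (necklaceOf π 1))
    (ha1 : π 1 ≠ 1) (ha0 : π 1 ≠ 0) (hb : π 0 ≠ 1) (hab : cpos 1 (π 1) < cpos 1 (π 0))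
    (haX : π 1 ∈ X) : π 0 ∈ X := by
  by_contra hbX
  obtain ⟨u, hu, huX⟩ := not_subset.1 fun h => hne (eq_of_subset_of_card_le h hcard.le).symm
  obtain ⟨v, hvX, hv⟩ := not_subset.1 fun h => hne (eq_of_subset_of_card_le h hcard.ge)
  have hua := cpos_one_lt_cpos_apply_one (hX 0) ha0 hb haX (mem_sdiff.2 ⟨hu, huX⟩)
  have hbv := cpos_apply_zero_lt_cpos_one (hX (1 + 1)) hb hbX (mem_sdiff.2 ⟨hvX, hv⟩)
  have huN : u ∈ necklaceOf π 1 :=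
    (mem_necklaceOf_mul_swap_iff (haX.ne_of_notMem huX).symm
      (hu.ne_of_notMem (apply_zero_notMem_necklaceOf_mul_swap_one hb))).1 hu
  have hvN : v ∉ necklaceOf π 1 :=
    (mem_necklaceOf_mul_swap_iff ((apply_one_mem_necklaceOf_mul_swap_one π).ne_of_notMem hv).symm
      (hvX.ne_of_notMem hbX)).not.1 hv
  obtain ⟨m, hm⟩ := hsep
  have hmau := hm (π 1) (mem_sdiff.2 ⟨haX, apply_one_notMem_necklaceOf_one ha1⟩) u
    (mem_sdiff.2 ⟨huN, huX⟩)
  have hmvb := hm v (mem_sdiff.2 ⟨hvX, hvN⟩) (π 0)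
    (mem_sdiff.2 ⟨apply_zero_mem_necklaceOf_one π, hbX⟩)
  exact (cpos_le_cpos_of_crossing hua hab hbv hmau).not_gt hmvb

theorem ll_necklaceOf_one (hX : ∀ i, Ll i (necklaceOf (π * swap 1 0) i) X)
    (ha1 : π 1 ≠ 1) (ha0 : π 1 ≠ 0) (hb : π 0 ≠ 1) (hba : π 1 ∈ X → π 0 ∈ X) :
    Ll 1 (necklaceOf π 1) X := by
  intro x hx y hy
  obtain ⟨hxN, hxX⟩ := mem_sdiff.1 hx
  obtain ⟨hyX, hyN⟩ := mem_sdiff.1 hy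
  have hxa : x ≠ π 1 := hxN.ne_of_notMem (apply_one_notMem_necklaceOf_one ha1)
  have hyb : y ≠ π 0 := ((apply_zero_mem_necklaceOf_one π).ne_of_notMem hyN).symm
  by_cases hbX : π 0 ∈ X
  · have hx' : x ∈ necklaceOf (π * swap 1 0) 1 \ X :=
      mem_sdiff.2 ⟨(mem_necklaceOf_mul_swap_iff hxa (hbX.ne_of_notMem hxX).symm).2 hxN, hxX⟩
    by_cases hya : y = π 1
    · rw [hya] at hyX ⊢
      exact cpos_one_lt_cpos_apply_one (hX 0) ha0 hb hyX hx'
    · exact hX 1 x hx' y (mem_sdiff.2 ⟨hyX, (mem_necklaceOf_mul_swap_iff hya hyb).not.2 hyN⟩)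
  · have hya : y ≠ π 1 := fun h => hbX (hba (h ▸ hyX))
    have hy' : y ∈ X \ necklaceOf (π * swap 1 0) 1 :=
      mem_sdiff.2 ⟨hyX, (mem_necklaceOf_mul_swap_iff hya hyb).not.2 hyN⟩
    by_cases hxb : x = π 0
    · rw [hxb]
      exact cpos_apply_zero_lt_cpos_one (hX (1 + 1)) hb hbX hy'
    · exact hX 1 x (mem_sdiff.2 ⟨(mem_necklaceOf_mul_swap_iff hxa hxb).2 hxN, hxX⟩) y hy'

end SimpleAlignment

/-- Proposition 2: with a simple alignment `(i, j) = (π(1), π(n))` (here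
`n ≡ 0`) and `π'` obtained by swapping the two images, any
`X ∈ Int(N(π'))` which is weakly separated from `N_1` and distinct from
`N'_1` belongs to `Int(N(π))`. -/
theorem simple_alignment_interior [NeZero n] (π : Equiv.Perm (Fin n))
    (h : IsAlignment π (π 1) (π 0)) (r : ℕ)
    (hr : ∀ i, (necklaceOf π i).card = r)
    (X : Finset (Fin n))
    (hX : X ∈ Interior r (necklaceOf (π * Equiv.swap 1 0)))
    (hsep : WSep X (necklaceOf π 1))
    (hne : X ≠ necklaceOf (π * Equiv.swap 1 0) 1) :
    X ∈ Interior r (necklaceOf π) := by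
  obtain ⟨hcard, hint⟩ := hX
  obtain ⟨hpos, hab, -⟩ := h
  rw [symm_apply_apply] at hpos hab
  have ha1 : π 1 ≠ 1 := cpos_eq_zero_iff.not.1 hpos.ne'
  have hb1 : π 0 ≠ 1 := cpos_eq_zero_iff.not.1 (by omega)
  have ha0 : π 1 ≠ 0 := fun ha => by
    have := cpos_le_cpos_add_one_self 0 (π 0)
    rw [zero_add] at this
    rw [ha] at hab
    omega
  have hcard' : X.card = (necklaceOf (π * swap 1 0) 1).card := by
    rw [hcard, necklaceOf_mul_swap_one ha1 hb1, card_map, hr]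
  have hba := apply_zero_mem_of_apply_one_mem hint hcard' hne hsep ha1 ha0 hb1 hab
  refine ⟨hcard, fun i => ?_⟩
  rcases eq_or_ne i 1 with rfl | hi
  · exact ll_necklaceOf_one hint ha1 ha0 hb1 hba
  · rw [← necklaceOf_mul_swap_of_ne hi ha1 hb1]
    exact hint i
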